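/- arXiv:1701.01070 — 2 statements merged into one kernel-verified Lean document; each statement's English description precedes it below -/
import Mathlib

section
/- Let h₀ ∈ H with P h₀ = 0, and let h_k := ∑_{i=0}^{k} (P∘R∘P∘R)^i h₀ be the partial sums of the scattering control Neumann series. Let Z := P∘R∘Q + Q∘R∘P and let χ be the orthogonal projection of H onto the closed subspace ker Z. Then Q(R h_k) converges in norm to R(χ h₀) as k → ∞, and the norms ‖Q(R h_k)‖ decrease monotonically to ‖χ h₀‖. -/
/-!
Write `Q = 1 - P` and `E = Q R Q`. From `R² = 1` and `P² = P` one gets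
`Q R (P R P R) = E² Q R - E`, and as `P h₀ = 0` the partial sums telescope to
`Q (R h_k) = E^(2k+1) h₀`. `E` is a self-adjoint contraction, so `‖E^n h₀‖` decreases, and
`⟪E^(2m) h₀, E^(2n) h₀⟫ = ‖E^(m+n) h₀‖²` makes `E^(2k) h₀` a Cauchy sequence whose limit is the
orthogonal projection of `h₀` onto the fixed space of `E²`. That fixed space is
`{x | P x = 0, P (R x) = 0} = ker Z ∩ ker P`, on which `E = R`; since `Z` commutes with `P` and
`P h₀ = 0`, projecting `h₀` onto it is the same as projecting onto `ker Z`, i.e. applying `χ`.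
-/

open Filter Topology Finset

section NeumannSeries

variable {A : Type*} [Ring A] {r p : A}

theorem one_sub_mul_mul_neumann_ratio (hr : r * r = 1) (hp : IsIdempotentElem p) :
    (1 - p) * r * (p * r * p * r) =
      ((1 - p) * r * (1 - p)) ^ 2 * ((1 - p) * r) - (1 - p) * r * (1 - p) := by
  set q := 1 - p with hq
  have hpq : p = 1 - q := by rw [hq, sub_sub_cancel]
  have hr' : ∀ x, r * (r * x) = x := fun x => by rw [← mul_assoc, hr, one_mul]
  have hq' : ∀ x, q * (q * x) = q * x := fun x => by rw [← mul_assoc, hp.one_sub.eq]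
  rw [hpq]
  simp only [pow_two, mul_sub, sub_mul, mul_one, one_mul, mul_assoc, hr, hr', hq']
  abel

theorem one_sub_mul_geom_sum_neumann_ratio (hp : IsIdempotentElem p) (k : ℕ) :
    (1 - p) * ∑ i ∈ range (k + 1), (p * r * p * r) ^ i = 1 - p := by
  have h : (1 - p) * (p * r * p * r) = 0 := by
    simp only [← mul_assoc, hp.one_sub_mul_self, zero_mul]
  rw [geom_sum_succ, mul_add, ← mul_assoc, h, zero_mul, zero_add, mul_one]

theorem one_sub_mul_mul_geom_sum_mul_one_sub (hr : r * r = 1) (hp : IsIdempotentElem p)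
    (k : ℕ) : (1 - p) * r * (∑ i ∈ range (k + 1), (p * r * p * r) ^ i) * (1 - p) =
      ((1 - p) * r * (1 - p)) ^ (2 * k + 1) := by
  set e := (1 - p) * r * (1 - p) with he_def
  induction k with
  | zero => simp [e]
  | succ k ih =>
    set S := ∑ i ∈ range (k + 1), (p * r * p * r) ^ i
    have he : e * S * (1 - p) = e := by
      rw [he_def, mul_assoc _ (1 - p) S, one_sub_mul_geom_sum_neumann_ratio hp,
        mul_assoc _ (1 - p), hp.one_sub.eq]
    calc (1 - p) * r * (∑ i ∈ range (k + 1 + 1), (p * r * p * r) ^ i) * (1 - p)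
        = (1 - p) * r * (p * r * p * r) * S * (1 - p) + e := by
          rw [geom_sum_succ, mul_add, add_mul, mul_one, ← mul_assoc ((1 - p) * r)]
      _ = e ^ 2 * ((1 - p) * r * S * (1 - p)) := by
        rw [one_sub_mul_mul_neumann_ratio hr hp, ← he_def, sub_mul, sub_mul, he, sub_add_cancel]
        simp only [mul_assoc]
      _ = e ^ (2 * (k + 1) + 1) := by rw [ih, ← pow_add]; ring_nf

end NeumannSeries

section SelfAdjointPowers

variable {𝕜 H : Type*} [RCLike 𝕜] [NormedAddCommGroup H] [InnerProductSpace 𝕜 H]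
  {T : H →L[𝕜] H}

theorem antitone_norm_pow_apply (hT : ‖T‖ ≤ 1) (x : H) : Antitone fun n => ‖(T ^ n) x‖ :=
  antitone_nat_of_succ_le fun n => by
    rw [pow_succ', mul_apply_eq_comp]
    exact T.le_of_opNorm_le hT _ |>.trans_eq (one_mul _)

variable [CompleteSpace H]

theorem IsSelfAdjoint.inner_map_left (hT : IsSelfAdjoint T) (x y : H) :
    inner 𝕜 (T x) y = inner 𝕜 x (T y) :=
  hT.isSymmetric x y

theorem IsSelfAdjoint.inner_pow_apply_pow_apply (hT : IsSelfAdjoint T) (m n : ℕ) (x y : H) :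
    inner 𝕜 ((T ^ m) x) ((T ^ n) y) = inner 𝕜 x ((T ^ (m + n)) y) := by
  rw [(hT.pow m).inner_map_left, pow_add, mul_apply_eq_comp]

theorem IsSelfAdjoint.cauchySeq_pow_two_mul_apply (hT : IsSelfAdjoint T) (hT1 : ‖T‖ ≤ 1)
    (x : H) : CauchySeq fun k => (T ^ (2 * k)) x := by
  set c : ℕ → ℝ := fun n => ‖(T ^ n) x‖ ^ 2
  have hc : Antitone c := fun m n hmn =>
    pow_le_pow_left₀ (norm_nonneg _) (antitone_norm_pow_apply hT1 x hmn) 2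
  obtain ⟨L, hL⟩ : ∃ L, Tendsto c atTop (𝓝 L) :=
    ⟨_, tendsto_atTop_ciInf hc ⟨0, Set.forall_mem_range.2 fun n => sq_nonneg _⟩⟩
  have hdist : ∀ m n : ℕ, dist ((T ^ (2 * m)) x) ((T ^ (2 * n)) x) ^ 2 =
      c (2 * m) - 2 * c (m + n) + c (2 * n) := fun m n => by
    have h : inner 𝕜 ((T ^ (2 * m)) x) ((T ^ (2 * n)) x) =
        inner 𝕜 ((T ^ (m + n)) x) ((T ^ (m + n)) x) := by
      rw [hT.inner_pow_apply_pow_apply, hT.inner_pow_apply_pow_apply]; ring_nf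
    rw [dist_eq_norm, norm_sub_sq (𝕜 := 𝕜), h, inner_self_eq_norm_sq]
  have hidx : ∀ f : ℕ × ℕ → ℕ, (∀ p, min p.1 p.2 ≤ f p) → Tendsto f atTop atTop := fun f hf =>
    tendsto_atTop_atTop.2 fun b => ⟨(b, b), fun p hp => (le_min hp.1 hp.2).trans (hf p)⟩
  have hsq : Tendsto (fun p : ℕ × ℕ => dist ((T ^ (2 * p.1)) x) ((T ^ (2 * p.2)) x) ^ 2) atTop
      (𝓝 0) := by
    have h := ((hL.comp (hidx (fun p => 2 * p.1) fun p => by omega)).sub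
      ((hL.comp (hidx (fun p => p.1 + p.2) fun p => by omega)).const_mul 2)).add
      (hL.comp (hidx (fun p => 2 * p.2) fun p => by omega))
    rw [show L - 2 * L + L = 0 by ring] at h
    simpa only [hdist, Function.comp_apply] using h
  rw [cauchySeq_iff_tendsto_dist_atTop_0]
  simpa only [Real.sqrt_sq dist_nonneg, Real.sqrt_zero] using hsq.sqrt

theorem IsSelfAdjoint.tendsto_pow_two_mul_apply (hT : IsSelfAdjoint T) (hT1 : ‖T‖ ≤ 1) (x : H) :
    Tendsto (fun k => (T ^ (2 * k)) x) atTop (𝓝 ((T ^ 2 - 1).ker.starProjection x)) := by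
  obtain ⟨y, hy⟩ := cauchySeq_tendsto_of_complete (hT.cauchySeq_pow_two_mul_apply hT1 x)
  have hmem : ∀ z, z ∈ (T ^ 2 - 1).ker ↔ (T ^ 2) z = z := fun z => by
    simp only [LinearMap.mem_ker, ContinuousLinearMap.coe_coe, sub_apply, one_apply_eq_self,
      sub_eq_zero]
  suffices (T ^ 2 - 1).ker.starProjection x = y by rwa [this]
  refine Submodule.eq_starProjection_of_mem_of_inner_eq_zero ((hmem y).2 ?_) fun w hw => ?_
  · have hsucc : Tendsto (fun k => (T ^ 2) ((T ^ (2 * k)) x)) atTop (𝓝 y) :=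
      (hy.comp (tendsto_add_atTop_nat 1)).congr fun k => by
        rw [Function.comp_apply, ← mul_apply_eq_comp, ← pow_add, mul_add, mul_one, add_comm]
    exact tendsto_nhds_unique (((T ^ 2).continuous.tendsto y).comp hy) hsucc
  · have hconst : ∀ k, inner 𝕜 ((T ^ (2 * k)) x) w = inner 𝕜 x w := fun k => by
      have hfix : (T ^ (2 * k)) w = w := by
        rw [pow_mul, FunLike.coe_pow_eq_iterate, Function.iterate_fixed ((hmem w).1 hw)]
      rw [(hT.pow _).inner_map_left, hfix]
    have hlim := hy.inner (𝕜 := 𝕜) (tendsto_const_nhds (x := w))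
    simp only [hconst] at hlim
    rw [inner_sub_left, tendsto_nhds_unique tendsto_const_nhds hlim, sub_self]

end SelfAdjointPowers

section ScatteringControl

variable {𝕜 H : Type*} [RCLike 𝕜] [NormedAddCommGroup H] [InnerProductSpace 𝕜 H]
  {R P : H →L[𝕜] H}

theorem IsIdempotentElem.apply_one_sub_apply (hP : IsIdempotentElem P) (x : H) :
    P ((1 - P) x) = 0 :=
  congr($(hP.mul_one_sub_self) x)

theorem compression_apply_of_apply_eq_zero {x : H} (hx : P x = 0) (hRx : P (R x) = 0) :
    ((1 - P) * R * (1 - P)) x = R x := by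
  simp only [mul_apply_eq_comp, sub_apply, one_apply_eq_self, hx, hRx, sub_zero]

theorem one_sub_apply_partial_sum_eq_compression_pow (hR2 : R * R = 1) (hP : IsIdempotentElem P)
    {h₀ : H} (hh₀ : P h₀ = 0) (k : ℕ) :
    (1 - P) (R (∑ i ∈ range (k + 1), ((P * R * P * R) ^ i) h₀)) =
      (((1 - P) * R * (1 - P)) ^ (2 * k + 1)) h₀ := by
  rw [← one_sub_mul_mul_geom_sum_mul_one_sub hR2 hP k]
  simp only [mul_apply_eq_comp, sub_apply (1 : H →L[𝕜] H) P h₀, one_apply_eq_self, hh₀, sub_zero,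
    _root_.sum_apply]

variable [CompleteSpace H]

theorem IsSelfAdjoint.norm_map_of_mul_self_eq_one (hR : IsSelfAdjoint R) (hR2 : R * R = 1)
    (x : H) : ‖R x‖ = ‖x‖ :=
  ContinuousLinearMap.norm_map_of_mem_unitary
    (Unitary.mem_iff.2 ⟨by rw [hR.star_eq, hR2], by rw [hR.star_eq, hR2]⟩) x

theorem IsStarProjection.norm_sq_add_norm_one_sub_apply_sq (hP : IsStarProjection P) (x : H) :
    ‖P x‖ ^ 2 + ‖(1 - P) x‖ ^ 2 = ‖x‖ ^ 2 := by
  have h : inner 𝕜 (P x) ((1 - P) x) = 0 := by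
    rw [hP.isSelfAdjoint.inner_map_left, hP.isIdempotentElem.apply_one_sub_apply,
      inner_zero_right]
  simpa only [sq, sub_apply, one_apply_eq_self, add_sub_cancel] using
    (norm_add_sq_eq_norm_sq_add_norm_sq_of_inner_eq_zero _ _ h).symm

theorem norm_compression_le_one (hR : IsSelfAdjoint R) (hR2 : R * R = 1)
    (hP : IsStarProjection P) : ‖(1 - P) * R * (1 - P)‖ ≤ 1 := by
  have hR1 : ‖R‖ ≤ 1 := R.opNorm_le_bound zero_le_one fun x => by
    rw [hR.norm_map_of_mul_self_eq_one hR2, one_mul]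
  have hQ1 : ‖1 - P‖ ≤ 1 := hP.one_sub.norm_le
  calc ‖(1 - P) * R * (1 - P)‖ ≤ ‖1 - P‖ * ‖R‖ * ‖1 - P‖ := norm_mul₃_le
    _ ≤ 1 * 1 * 1 := by gcongr
    _ = 1 := by norm_num

theorem mem_ker_compression_sq_sub_one_iff (hR : IsSelfAdjoint R) (hR2 : R * R = 1)
    (hP : IsStarProjection P) {x : H} :
    x ∈ (((1 - P) * R * (1 - P)) ^ 2 - 1).ker ↔ P x = 0 ∧ P (R x) = 0 := by
  set E := (1 - P) * R * (1 - P) with hE_def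
  have hE : IsSelfAdjoint E := hR.conjugate_self hP.one_sub.isSelfAdjoint
  rw [LinearMap.mem_ker, ContinuousLinearMap.coe_coe, sub_apply, one_apply_eq_self, sub_eq_zero]
  constructor
  · intro h
    have hx : P x = 0 := by
      rw [← h, sq, mul_apply_eq_comp]
      exact hP.isIdempotentElem.apply_one_sub_apply _
    have hEx : E x = (1 - P) (R x) := by
      simp only [hE_def, mul_apply_eq_comp, sub_apply (1 : H →L[𝕜] H) P x, one_apply_eq_self, hx,
        sub_zero]
    -- `E` is self-adjoint with `E² x = x`, so `‖E x‖ = ‖x‖ = ‖R x‖`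
    have hnorm : ‖E x‖ ^ 2 = ‖R x‖ ^ 2 := by
      have h2 := hE.inner_pow_apply_pow_apply 1 1 x x
      rw [pow_one, one_add_one_eq_two, h, inner_self_eq_norm_sq_to_K,
        inner_self_eq_norm_sq_to_K] at h2
      rw [hR.norm_map_of_mul_self_eq_one hR2]
      exact_mod_cast h2
    have hPRx := hP.norm_sq_add_norm_one_sub_apply_sq (R x)
    rw [← hEx, hnorm, add_eq_right, sq_eq_zero_iff, norm_eq_zero] at hPRx
    exact ⟨hx, hPRx⟩
  · rintro ⟨hx, hRx⟩
    rw [sq, mul_apply_eq_comp, compression_apply_of_apply_eq_zero hx hRx]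
    simp only [hE_def, mul_apply_eq_comp, sub_apply, one_apply_eq_self, hRx, sub_zero,
      ← mul_apply_eq_comp R R, hR2, hx]

theorem starProjection_ker_eq_starProjection_ker_compression (hR : IsSelfAdjoint R)
    (hR2 : R * R = 1) (hP : IsStarProjection P) {x : H} (hx : P x = 0) :
    (P * R * (1 - P) + (1 - P) * R * P).ker.starProjection x =
      (((1 - P) * R * (1 - P)) ^ 2 - 1).ker.starProjection x := by
  set K := (((1 - P) * R * (1 - P)) ^ 2 - 1).ker
  have hPP : ∀ y, P (P y) = P y := fun y => congr($(hP.isIdempotentElem.eq) y)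
  generalize hy : K.starProjection x = y
  obtain ⟨hPy, hPRy⟩ := (mem_ker_compression_sq_sub_one_iff hR hR2 hP).1
    (hy ▸ K.starProjection_apply_mem x)
  refine Submodule.eq_starProjection_of_mem_of_inner_eq_zero ?_ fun w hw => ?_
  · rw [LinearMap.mem_ker, ContinuousLinearMap.coe_coe]
    simp only [add_apply, mul_apply_eq_comp, sub_apply, one_apply_eq_self, hPy, hPRy, sub_zero,
      map_zero, add_zero]
  · have hQw : (1 - P) w ∈ K := by
      refine (mem_ker_compression_sq_sub_one_iff hR hR2 hP).2
        ⟨hP.isIdempotentElem.apply_one_sub_apply w, ?_⟩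
      have hZw : (P * R * (1 - P) + (1 - P) * R * P) w = 0 := hw
      simpa [mul_apply_eq_comp, hPP] using congr(P $hZw)
    have hPw : inner 𝕜 (x - y) (P w) = 0 := by
      rw [← hP.isSelfAdjoint.inner_map_left, map_sub, hx, hPy, sub_self, inner_zero_left]
    calc inner 𝕜 (x - y) w = inner 𝕜 (x - y) (P w) + inner 𝕜 (x - y) ((1 - P) w) := by
          rw [← inner_add_right, sub_apply, one_apply_eq_self, add_sub_cancel]
      _ = 0 := by rw [hPw, ← hy, K.starProjection_inner_eq_zero x _ hQw, add_zero]

end ScatteringControl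

/-- For `h₀` with `P h₀ = 0` and partial sums
`h_k := ∑_{i=0}^{k} (P∘R∘P∘R)^i h₀`, with `Z := P∘R∘Q + Q∘R∘P` (`Q = I − P`) and `χ` the
orthogonal projection onto `ker Z`, the interior parts `Q (R h_k)` converge in norm to
`R (χ h₀)`, and the norms `‖Q (R h_k)‖` decrease monotonically to `‖χ h₀‖`. -/
theorem stmt11 {H : Type*} [NormedAddCommGroup H] [InnerProductSpace ℂ H] [CompleteSpace H]
    (R P : H →L[ℂ] H)
    (hR : IsSelfAdjoint R) (hR2 : R ∘L R = 1)
    (hP : IsSelfAdjoint P) (hP2 : P ∘L P = P)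
    (Z : H →L[ℂ] H)
    (hZ : Z = P ∘L R ∘L ((1 : H →L[ℂ] H) - P) + ((1 : H →L[ℂ] H) - P) ∘L R ∘L P)
    (χ : H →L[ℂ] H) (hχ : IsSelfAdjoint χ) (hχ2 : χ ∘L χ = χ)
    (hχrange : LinearMap.range (χ : H →ₗ[ℂ] H) = LinearMap.ker (Z : H →ₗ[ℂ] H))
    (h₀ : H) (hh₀ : P h₀ = 0) :
    Tendsto
        (fun k : ℕ =>
          ((1 : H →L[ℂ] H) - P)
            (R (∑ i ∈ Finset.range (k + 1), ((P ∘L R ∘L P ∘L R) ^ i) h₀)))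
        atTop (nhds (R (χ h₀))) ∧
      Antitone
        (fun k : ℕ =>
          ‖((1 : H →L[ℂ] H) - P)
            (R (∑ i ∈ Finset.range (k + 1), ((P ∘L R ∘L P ∘L R) ^ i) h₀))‖) ∧
      Tendsto
        (fun k : ℕ =>
          ‖((1 : H →L[ℂ] H) - P)
            (R (∑ i ∈ Finset.range (k + 1), ((P ∘L R ∘L P ∘L R) ^ i) h₀))‖)
        atTop (nhds ‖χ h₀‖) := by
  have hPproj : IsStarProjection P := ⟨hP2, hP⟩
  have hχ_eq : χ = (LinearMap.ker (Z : H →ₗ[ℂ] H)).starProjection :=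
    ContinuousLinearMap.IsStarProjection.ext ⟨hχ2, hχ⟩ isStarProjection_starProjection
      (by rw [hχrange, Submodule.range_starProjection])
  subst hZ
  set E := (1 - P) * R * (1 - P)
  have hE : IsSelfAdjoint E := hR.conjugate_self hPproj.one_sub.isSelfAdjoint
  have hE1 : ‖E‖ ≤ 1 := norm_compression_le_one hR hR2 hPproj
  have hpartial : ∀ k, ((1 : H →L[ℂ] H) - P)
      (R (∑ i ∈ Finset.range (k + 1), ((P ∘L R ∘L P ∘L R) ^ i) h₀)) = (E ^ (2 * k + 1)) h₀ :=
    one_sub_apply_partial_sum_eq_compression_pow hR2 hPproj.isIdempotentElem hh₀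
  have hχh₀ : χ h₀ = (E ^ 2 - 1).ker.starProjection h₀ := by
    rw [hχ_eq]
    exact starProjection_ker_eq_starProjection_ker_compression hR hR2 hPproj hh₀
  have hEχ : E (χ h₀) = R (χ h₀) := by
    obtain ⟨hPχ, hPRχ⟩ := (mem_ker_compression_sq_sub_one_iff hR hR2 hPproj).1
      (hχh₀ ▸ Submodule.starProjection_apply_mem _ _)
    exact compression_apply_of_apply_eq_zero hPχ hPRχ
  have hconv : Tendsto (fun k => (E ^ (2 * k + 1)) h₀) atTop (𝓝 (R (χ h₀))) := by
    rw [← hEχ]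
    refine ((E.continuous.tendsto _).comp (hχh₀ ▸ hE.tendsto_pow_two_mul_apply hE1 h₀)).congr
      fun k => ?_
    rw [Function.comp_apply, pow_succ']
    rfl
  simp only [hpartial]
  refine ⟨hconv, (antitone_norm_pow_apply hE1 h₀).comp_monotone fun _ _ h => by omega, ?_⟩
  rw [← hR.norm_map_of_mul_self_eq_one hR2]
  exact hconv.norm
end

section
/- The set of h₀ ∈ H with P h₀ = 0 for which the partial sums ∑_{i=0}^{k} (P∘R∘P∘R)^i h₀ of the scattering control Neumann series converge in H as k → ∞ is dense in the kernel of P (the orthogonal complement of the range of P). -/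
/-!
Write `S = PRPR`, `B = PRP` and `T = (I - P)RPR`. From `P² = P` and `R² = I` one gets
`S^(k+1) = B^(2k) S` and `ST = S(I - S)`, so on `T q` the partial sums telescope to
`T q + S q - B^(2k) S q`. Since `B` is a self-adjoint contraction, `‖Bⁿ x‖` decreases to a limit
`L`, and `‖B^(2m) x - B^(2n) x‖² = ‖B^(2m) x‖² - 2‖B^(m+n) x‖² + ‖B^(2n) x‖²` tends to
`L - 2L + L = 0`, so `B^(2k) S q` converges. A vector `z ∈ ker P` orthogonal to `range T` satisfies
`0 = T* z = RPR z`, hence `S z = 0` and the series at `z` is constant. Finally `range T ⊆ ker P`,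
and a closed subspace `V ⊇ U` lies in the closure of `U + (Uᗮ ∩ V)`.
-/

open Filter Finset Topology

section Ring
variable {A : Type*} [Ring A] {p : A}

theorem geom_sum_succ_mul_of_mul_eq {s t : A} (h : s * t = s * (1 - s)) (k : ℕ) :
    (∑ i ∈ range (k + 1), s ^ i) * t = t + s - s ^ (k + 1) := by
  have htail : ∑ i ∈ range k, s ^ (i + 1) * t = s - s ^ (k + 1) := calc
    ∑ i ∈ range k, s ^ (i + 1) * t = (∑ i ∈ range k, s ^ i) * (1 - s) * s := by
      simp only [pow_succ, mul_assoc, h, sum_mul]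
      congr! 2
      noncomm_ring
    _ = s - s ^ (k + 1) := by rw [geom_sum_mul_neg, sub_mul, one_mul, pow_succ]
  rw [sum_range_succ', add_mul, sum_mul, htail, pow_zero, one_mul]
  abel

namespace IsIdempotentElem

theorem mul_mul_mul_pow_succ (hp : IsIdempotentElem p) (r : A) (k : ℕ) :
    (p * r * p * r) ^ (k + 1) = (p * r * p) ^ (2 * k) * (p * r * p * r) := by
  have hpp : ∀ x, p * (p * x) = p * x := fun x => by rw [← mul_assoc, hp.eq]
  have hsq : (p * r * p * r) ^ 2 = (p * r * p) ^ 2 * (p * r * p * r) := by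
    simp only [sq, mul_assoc, hpp]
  induction k with
  | zero => simp
  | succ k ih =>
    rw [pow_succ, ih, mul_assoc, ← sq, hsq, ← mul_assoc, ← pow_add, Nat.mul_succ]

theorem mul_one_sub_mul_mul_mul (hp : IsIdempotentElem p) (r : A) :
    p * ((1 - p) * r * p * r) = 0 := by
  simp only [← mul_assoc, mul_sub, mul_one, hp.eq, sub_self, zero_mul]

theorem geom_sum_succ_mul_one_sub_mul_mul_mul (hp : IsIdempotentElem p) {r : A} (hr : r * r = 1)
    (k : ℕ) :
    (∑ i ∈ range (k + 1), (p * r * p * r) ^ i) * ((1 - p) * r * p * r) =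
      (1 - p) * r * p * r + p * r * p * r - (p * r * p) ^ (2 * k) * (p * r * p * r) := by
  rw [geom_sum_succ_mul_of_mul_eq, hp.mul_mul_mul_pow_succ]
  have hrr : ∀ x, r * (r * x) = x := fun x => by rw [← mul_assoc, hr, one_mul]
  have hpp : ∀ x, p * (p * x) = p * x := fun x => by rw [← mul_assoc, hp.eq]
  simp only [mul_sub, sub_mul, one_mul, mul_one, mul_assoc, hrr, hpp]

end IsIdempotentElem

end Ring

theorem IsStarProjection.norm_mul_mul_le_one {E : Type*} [NormedRing E] [StarRing E]
    [CStarRing E] {p r : E} (hp : IsStarProjection p) (hr : r ∈ unitary E) :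
    ‖p * r * p‖ ≤ 1 := calc
  ‖p * r * p‖ ≤ ‖p‖ * ‖p‖ := by
    grw [norm_mul_le (p * r), CStarRing.norm_mul_mem_unitary p hr]
  _ ≤ 1 := mul_le_one₀ (hp.norm_le p) (norm_nonneg p) (hp.norm_le p)

namespace IsSelfAdjoint
variable {𝕜 E : Type*} [RCLike 𝕜] [NormedAddCommGroup E] [InnerProductSpace 𝕜 E] [CompleteSpace E]
  {B : E →L[𝕜] E}

theorem inner_pow_apply_pow_apply_s13 (hB : IsSelfAdjoint B) (m n : ℕ) (x y : E) :
    inner 𝕜 ((B ^ m) x) ((B ^ n) y) = inner 𝕜 x ((B ^ (m + n)) y) := by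
  rw [← ContinuousLinearMap.coe_coe, (hB.pow m).isSymmetric, ContinuousLinearMap.coe_coe,
    ← mul_apply_eq_comp, ← pow_add]

theorem norm_pow_two_mul_apply_sub_sq (hB : IsSelfAdjoint B) (m n : ℕ) (x : E) :
    ‖(B ^ (2 * m)) x - (B ^ (2 * n)) x‖ ^ 2 =
      ‖(B ^ (2 * m)) x‖ ^ 2 - 2 * ‖(B ^ (m + n)) x‖ ^ 2 + ‖(B ^ (2 * n)) x‖ ^ 2 := by
  have hcross : inner 𝕜 ((B ^ (2 * m)) x) ((B ^ (2 * n)) x) =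
      inner 𝕜 ((B ^ (m + n)) x) ((B ^ (m + n)) x) := by
    rw [hB.inner_pow_apply_pow_apply_s13, hB.inner_pow_apply_pow_apply_s13]
    ring_nf
  rw [norm_sub_sq (𝕜 := 𝕜), hcross, inner_self_eq_norm_sq]

theorem cauchySeq_pow_two_mul_apply_s13 (hB : IsSelfAdjoint B) (hB1 : ‖B‖ ≤ 1) (x : E) :
    CauchySeq fun n => (B ^ (2 * n)) x := by
  set a : ℕ → ℝ := fun n => ‖(B ^ n) x‖ ^ 2
  have ha : Antitone a := antitone_nat_of_succ_le fun n => by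
    refine pow_le_pow_left₀ (norm_nonneg _) ?_ 2
    rw [pow_succ', mul_apply_eq_comp]
    exact (B.le_opNorm _).trans (mul_le_of_le_one_left (norm_nonneg _) hB1)
  obtain ⟨L, hL⟩ : ∃ L, Tendsto a atTop (𝓝 L) :=
    ⟨_, tendsto_atTop_ciInf ha ⟨0, by rintro _ ⟨n, rfl⟩; positivity⟩⟩
  have h2 : Tendsto (fun n : ℕ => 2 * n) atTop atTop :=
    tendsto_atTop_mono (fun n => Nat.le_mul_of_pos_left n two_pos) tendsto_id
  have hdist : Tendsto (fun p : ℕ × ℕ => dist ((B ^ (2 * p.1)) x) ((B ^ (2 * p.2)) x) ^ 2)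
      atTop (𝓝 0) := by
    simp only [dist_eq_norm, hB.norm_pow_two_mul_apply_sub_sq]
    rw [← prod_atTop_atTop_eq]
    have := ((hL.comp (h2.comp tendsto_fst)).sub
      ((hL.comp (tendsto_fst.atTop_add_atTop tendsto_snd)).const_mul 2)).add
        (hL.comp (h2.comp tendsto_snd))
    rwa [show L - 2 * L + L = 0 by ring] at this
  rw [cauchySeq_iff_tendsto_dist_atTop_0]
  simpa using hdist.sqrt.congr fun p => Real.sqrt_sq dist_nonneg

end IsSelfAdjoint

theorem Submodule.le_topologicalClosure_sup_orthogonal_inf {𝕜 E : Type*} [RCLike 𝕜]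
    [NormedAddCommGroup E] [InnerProductSpace 𝕜 E] [CompleteSpace E] {U V : Submodule 𝕜 E}
    (hV : IsClosed (V : Set E)) (hUV : U ≤ V) :
    V ≤ (U ⊔ (Uᗮ ⊓ V)).topologicalClosure := by
  intro v hv
  have : CompleteSpace U.topologicalClosure := U.isClosed_topologicalClosure.completeSpace_coe
  obtain ⟨y, hy, z, hz, rfl⟩ := U.topologicalClosure.exists_add_mem_mem_orthogonal v
  rw [orthogonal_closure] at hz
  have hyV : y ∈ V := topologicalClosure_minimal U hUV hV hy
  refine add_mem (topologicalClosure_mono le_sup_left hy) (le_topologicalClosure _ ?_)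
  exact mem_sup_right ⟨hz, by simpa using V.sub_mem hv hyV⟩

theorem ContinuousLinearMap.geom_sum_apply_of_apply_eq_zero {R M : Type*} [Semiring R]
    [TopologicalSpace M] [AddCommMonoid M] [Module R M] [ContinuousAdd M] {S : M →L[R] M}
    {z : M} (hz : S z = 0) (k : ℕ) :
    (∑ i ∈ range (k + 1), S ^ i) z = z := by
  simp [sum_range_succ', pow_succ, mul_apply_eq_comp, hz]

section Neumann
variable {𝕜 E : Type*} [RCLike 𝕜] [NormedAddCommGroup E] [InnerProductSpace 𝕜 E]
  [CompleteSpace E] {P R : E →L[𝕜] E}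

theorem exists_tendsto_geom_sum_apply_one_sub_mul_mul_mul_apply (hR : IsSelfAdjoint R)
    (hR2 : R * R = 1) (hP : IsStarProjection P) (q : E) :
    ∃ l, Tendsto (fun k => (∑ i ∈ range (k + 1), (P * R * P * R) ^ i) (((1 - P) * R * P * R) q))
      atTop (𝓝 l) := by
  have hRu : R ∈ unitary (E →L[𝕜] E) := Unitary.mem_iff.mpr (by simp [hR.star_eq, hR2])
  have hB : IsSelfAdjoint (P * R * P) := by simpa [hP.isSelfAdjoint.star_eq] using hR.conjugate P
  obtain ⟨l, hl⟩ := cauchySeq_tendsto_of_complete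
    (hB.cauchySeq_pow_two_mul_apply_s13 (hP.norm_mul_mul_le_one hRu) ((P * R * P * R) q))
  refine ⟨_, (tendsto_const_nhds (x := ((1 - P) * R * P * R + P * R * P * R) q)).sub hl
    |>.congr fun k => ?_⟩
  exact congr($(hP.isIdempotentElem.geom_sum_succ_mul_one_sub_mul_mul_mul hR2 k) q).symm

theorem mul_apply_eq_zero_of_mem_orthogonal_range (hR : IsSelfAdjoint R) (hR2 : R * R = 1)
    (hP : IsSelfAdjoint P) {z : E} (hz : z ∈ ((1 - P) * R * P * R).rangeᗮ)
    (hPz : P z = 0) : (P * R) z = 0 := by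
  rw [ContinuousLinearMap.orthogonal_range, LinearMap.mem_ker,
    ← ContinuousLinearMap.star_eq_adjoint] at hz
  simp only [star_mul, star_sub, star_one, hR.star_eq, hP.star_eq,
    ContinuousLinearMap.coe_coe] at hz
  calc (P * R) z = R ((R * (P * (R * (1 - P)))) z) := by
        simp only [mul_apply_eq_comp, sub_apply, hPz, sub_zero, one_apply_eq_self,
          ← mul_apply_eq_comp R R, hR2]
    _ = 0 := by rw [hz, map_zero]

theorem exists_tendsto_geom_sum_apply_of_mem_sup (hR : IsSelfAdjoint R) (hR2 : R * R = 1)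
    (hP : IsStarProjection P) {w : E}
    (hw : w ∈ ((1 - P) * R * P * R).range ⊔ (((1 - P) * R * P * R).rangeᗮ ⊓ P.ker)) :
    ∃ l, Tendsto (fun k => (∑ i ∈ range (k + 1), (P * R * P * R) ^ i) w) atTop (𝓝 l) := by
  obtain ⟨_, ⟨q, rfl⟩, z, ⟨hzT, hzP⟩, rfl⟩ := Submodule.mem_sup.mp hw
  have hSz : (P * R * P * R) z = 0 := by
    rw [mul_assoc (P * R), mul_apply_eq_comp,
      mul_apply_eq_zero_of_mem_orthogonal_range hR hR2 hP.isSelfAdjoint hzT hzP, map_zero]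
  obtain ⟨l, hl⟩ := exists_tendsto_geom_sum_apply_one_sub_mul_mul_mul_apply hR hR2 hP q
  refine ⟨l + z, (hl.add_const z).congr fun k => ?_⟩
  rw [map_add, ContinuousLinearMap.geom_sum_apply_of_apply_eq_zero hSz]
  rfl

end Neumann

/-- The set of `h₀ ∈ H` with `P h₀ = 0` for which the partial sums
`∑_{i=0}^{k} (P∘R∘P∘R)^i h₀` of the scattering control Neumann series converge in `H`
is dense in the kernel of `P`. -/
theorem stmt13 {H : Type*} [NormedAddCommGroup H] [InnerProductSpace ℂ H] [CompleteSpace H]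
    (R P : H →L[ℂ] H)
    (hR : IsSelfAdjoint R) (hR2 : R ∘L R = 1)
    (hP : IsSelfAdjoint P) (hP2 : P ∘L P = P) :
    ∀ h : H, P h = 0 →
      h ∈ closure {h₀ : H | P h₀ = 0 ∧
        ∃ l : H,
          Tendsto (fun k : ℕ => ∑ i ∈ Finset.range (k + 1), ((P ∘L R ∘L P ∘L R) ^ i) h₀)
            atTop (nhds l)} := by
  intro h hh
  have hPproj : IsStarProjection P := ⟨hP2, hP⟩
  have hS : P ∘L R ∘L P ∘L R = P * R * P * R := by simp only [mul_assoc]; rfl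
  set T := (1 - P) * R * P * R
  have hTP : T.range ≤ P.ker := by
    rintro _ ⟨q, rfl⟩
    exact congr($(hPproj.isIdempotentElem.mul_one_sub_mul_mul_mul R) q)
  set W := T.range ⊔ (T.rangeᗮ ⊓ P.ker)
  have hker : h ∈ closure (W : Set H) := by
    rw [← Submodule.topologicalClosure_coe]
    exact Submodule.le_topologicalClosure_sup_orthogonal_inf P.isClosed_ker hTP hh
  refine closure_mono (fun w hw => ?_) hker
  refine ⟨sup_le hTP inf_le_right hw, ?_⟩
  simpa only [hS, ← _root_.sum_apply] using
    exists_tendsto_geom_sum_apply_of_mem_sup hR hR2 hPproj hw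
end
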